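/- arXiv:2103.08959 — 4 statements merged into one kernel-verified Lean document; each statement's English description precedes it below -/
import Mathlib

section
/- Let n ≥ 1 and let 1 > μ₁ > μ₂ > ⋯ > μ_{n+1} > 0. Then there exist constants C > 0 and c ∈ (0,1), depending only on μ₁,…,μ_{n+1}, such that for every m ≥ 1 and every choice of monic real polynomials p₁,…,p_m of degree n, each of the form p_i(x) = (x − λ₁^{(i)})⋯(x − λ_n^{(i)}) with μ_k ≥ λ_k^{(i)} ≥ μ_{k+1} for all k = 1,…,n, one has ‖F(p₁)F(p₂)⋯F(p_m)‖ ≤ C c^m, where ‖·‖ is the operator norm on n×n real matrices induced by the Euclidean norm. -/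
/-!
Put `v k = μ (k + 1)`, `t = (μ 0 + 1) / 2` and `N k = ∏_{l < k} (X - v l)`. In the Newton basis
`N 0, …, N (n-1)` of `ℝ[X] / (p)`, multiplication by `X` has `v` on the diagonal, ones on the
superdiagonal, and the Newton coefficients (divided differences on the nodes `v`) of `N n - p` added
to its last row. Interlacing makes `(-1)^i (N n - p)(v i) ≥ 0`, so every divided difference is a
sum of nonnegative terms and the matrix is nonnegative. Evaluating at `t` shows that it maps the
positive vector `w k = N k (t)` to at most `t • w`, because `p(t) > 0`. Since `F(p)` is conjugate to
this matrix by a change of basis independent of `p`, a product of `m` Frobenius matrices is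
`B⁻¹ A B` with `A ≥ 0` and `A w ≤ tᵐ w`, hence has norm at most `C tᵐ`.
-/

open Polynomial

/-- The Frobenius (companion-type) matrix of a monic polynomial
`p(z) = z^n + b_{n-1} z^{n-1} + ⋯ + b₀`: the first row is `(-b_{n-1}, …, -b₀)`,
the subdiagonal entries are `1`, and all other entries vanish. -/
noncomputable def frobeniusMatrix (n : ℕ) (p : Polynomial ℝ) : Matrix (Fin n) (Fin n) ℝ :=
  Matrix.of fun i j =>
    if (i : ℕ) = 0 then -p.coeff (n - 1 - (j : ℕ))
    else if (i : ℕ) = (j : ℕ) + 1 then 1 else 0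

/-- The operator norm on `n × n` real matrices induced by the Euclidean norm. -/
noncomputable def matrixL2OpNorm {n : ℕ} (M : Matrix (Fin n) (Fin n) ℝ) : ℝ :=
  ‖LinearMap.toContinuousLinearMap (Matrix.toEuclideanLin M)‖

open Finset Lagrange Matrix

theorem neg_one_pow_card_mul_prod_sub_nonneg {ι R : Type*} [DecidableEq ι] [CommRing R]
    [LinearOrder R] [IsStrictOrderedRing R] {s S : Finset ι} (hS : S ⊆ s) {x : R} {y : ι → R}
    (hle : ∀ l ∈ S, x ≤ y l) (hge : ∀ l ∈ s \ S, y l ≤ x) :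
    0 ≤ (-1) ^ #S * ∏ l ∈ s, (x - y l) := by
  have hS_prod : ∏ l ∈ S, (x - y l) = (-1) ^ #S * ∏ l ∈ S, (y l - x) := by
    rw [← prod_const, ← prod_mul_distrib]
    exact prod_congr rfl fun _ _ => by ring
  have hsq : ((-1 : R) ^ #S) * (-1) ^ #S = 1 := by rw [← pow_add, Even.neg_one_pow ⟨_, rfl⟩]
  calc 0 ≤ (∏ l ∈ s \ S, (x - y l)) * ∏ l ∈ S, (y l - x) :=
        mul_nonneg (prod_nonneg fun l hl => sub_nonneg.2 (hge l hl))
          (prod_nonneg fun l hl => sub_nonneg.2 (hle l hl))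
    _ = (-1) ^ #S * ∏ l ∈ s, (x - y l) := by
        rw [← prod_sdiff hS, hS_prod]
        linear_combination (-(∏ l ∈ s \ S, (x - y l)) * ∏ l ∈ S, (y l - x)) * hsq

theorem X_mul_nodal_range {R : Type*} [CommRing R] (v : ℕ → R) (k : ℕ) :
    X * nodal (range k) v = nodal (range (k + 1)) v + C (v k) * nodal (range k) v := by
  rw [range_add_one, nodal_insert_eq_nodal notMem_range_self]
  ring

section Newton

variable {R : Type*} [CommRing R] [Nontrivial R]

@[simp]
theorem natDegree_nodal_range (v : ℕ → R) (k : ℕ) : (nodal (range k) v).natDegree = k := by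
  rw [natDegree_nodal, card_range]

theorem coeff_nodal_range_self (v : ℕ → R) (k : ℕ) : (nodal (range k) v).coeff k = 1 := by
  simpa using (nodal_monic (s := range k) (v := v)).coeff_natDegree

theorem degree_nodal_sub_nodal_lt {ι κ : Type*} {s : Finset ι} {s' : Finset κ} (v : ι → R)
    (v' : κ → R) (h : #s = #s') : (nodal s v - nodal s' v').degree < #s := by
  have hlt := degree_sub_lt_left (p := nodal s v) (q := nodal s' v')
    (by rw [degree_nodal, degree_nodal, h]) nodal_ne_zero
    (nodal_monic.leadingCoeff.trans nodal_monic.leadingCoeff.symm)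
  rwa [degree_nodal] at hlt

theorem exists_eq_sum_nodal_range (v : ℕ → R) {n : ℕ} {q : R[X]} (hq : q.degree < n) :
    ∃ d : ℕ → R, q = ∑ k ∈ range n, C (d k) * nodal (range k) v := by
  induction n generalizing q with
  | zero => exact ⟨0, by simpa using hq⟩
  | succ n ih =>
    have hlt : (q - C (q.coeff n) * nodal (range n) v).degree < n := by
      rw [degree_lt_iff_coeff_zero] at hq ⊢
      intro m hm
      rcases hm.eq_or_lt with rfl | hm
      · simp [coeff_nodal_range_self]
      · simp [hq m hm, coeff_eq_zero_of_natDegree_lt (natDegree_nodal_range v n ▸ hm)]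
    obtain ⟨d, hd⟩ := ih hlt
    refine ⟨Function.update d n (q.coeff n), ?_⟩
    rw [sum_range_succ, Function.update_self, sum_congr rfl fun k hk =>
      by rw [Function.update_of_ne (mem_range.1 hk).ne], ← hd, sub_add_cancel]

end Newton

section DividedDifference

variable {F : Type*} [Field F]

theorem eq_sum_div_of_eq_sum_nodal_range {v : ℕ → F} {n : ℕ} (hv : Set.InjOn v (Set.Iio n))
    {q : F[X]} {d : ℕ → F} (hq : q = ∑ j ∈ range n, C (d j) * nodal (range j) v) {k : ℕ}
    (hk : k < n) :
    d k = ∑ i ∈ range (k + 1), q.eval (v i) / ∏ l ∈ (range (k + 1)).erase i, (v i - v l) := by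
  set r := ∑ j ∈ range (k + 1), C (d j) * nodal (range j) v
  have hr_deg : r.degree < #(range (k + 1)) := by
    have : r.natDegree ≤ k := natDegree_sum_le_of_forall_le _ _ fun j hj =>
      (natDegree_C_mul_le _ _).trans (by simp at hj ⊢; omega)
    exact (degree_le_of_natDegree_le this).trans_lt
      (by rw [card_range]; exact_mod_cast k.lt_succ_self)
  have hr_coeff : r.coeff k = d k := by
    rw [finsetSum_coeff, sum_range_succ, sum_eq_zero, zero_add, coeff_C_mul,
      coeff_nodal_range_self, mul_one]
    intro j hj
    rw [coeff_C_mul, coeff_eq_zero_of_natDegree_lt (by simpa using hj), mul_zero]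
  have hr_eval : ∀ i ∈ range (k + 1), r.eval (v i) = q.eval (v i) := by
    intro i hi
    rw [hq, ← sum_range_add_sum_Ico _ (show k + 1 ≤ n by omega), eval_add, left_eq_add,
      eval_finsetSum]
    refine sum_eq_zero fun j hj => ?_
    rw [eval_mul, eval_nodal_at_node (by simp at hi hj ⊢; omega), mul_zero]
  rw [← hr_coeff, ← sum_congr rfl fun i hi => by rw [← hr_eval i hi]]
  simpa using coeff_eq_sum (hv.mono (by simp; omega)) hr_deg

theorem nonneg_of_eq_sum_nodal_range [LinearOrder F] [IsStrictOrderedRing F] {v : ℕ → F} {n : ℕ}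
    (hv : StrictAntiOn v (Set.Iio n)) {q : F[X]} {d : ℕ → F}
    (hq : q = ∑ j ∈ range n, C (d j) * nodal (range j) v)
    (hsign : ∀ i < n, 0 ≤ (-1) ^ i * q.eval (v i)) {k : ℕ} (hk : k < n) : 0 ≤ d k := by
  rw [eq_sum_div_of_eq_sum_nodal_range hv.injOn hq hk]
  refine sum_nonneg fun i hi => ?_
  rw [mem_range] at hi
  -- exactly the `i` nodes `v l` with `l < i` lie above `v i`
  have hden : 0 ≤ (-1) ^ i * ∏ l ∈ (range (k + 1)).erase i, (v i - v l) := by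
    have hS : range i ⊆ (range (k + 1)).erase i := fun l hl => by simp at hl ⊢; omega
    simpa using neg_one_pow_card_mul_prod_sub_nonneg hS
      (fun l hl => hv.antitoneOn (by simp at hl ⊢; omega) (by simp; omega) (by simp at hl; omega))
      (fun l hl => hv.antitoneOn (by simp; omega) (by simp at hl ⊢; omega) (by simp at hl; omega))
  rw [← mul_div_mul_left _ _ (pow_ne_zero i (neg_ne_zero.2 one_ne_zero))]
  exact div_nonneg (hsign i (by omega)) hden

end DividedDifference

theorem neg_one_pow_mul_eval_nodal_sub_prod_nonneg {v : ℕ → ℝ} {n : ℕ}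
    (hv : AntitoneOn v (Set.Iio n)) {lam : Fin n → ℝ} (hlo : ∀ k : Fin n, v k ≤ lam k)
    (hhi : ∀ k : Fin n, 0 < (k : ℕ) → lam k ≤ v (k - 1)) {i : ℕ} (hi : i < n) :
    0 ≤ (-1) ^ i * (nodal (range n) v - ∏ k, (X - C (lam k))).eval (v i) := by
  have hsign := neg_one_pow_card_mul_prod_sub_nonneg (subset_univ (Iic (⟨i, hi⟩ : Fin n)))
    (x := v i) (y := lam)
    (fun k hk => (hv (by simp) (by simpa using hi) (by simpa [Fin.le_def] using hk)).trans (hlo k))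
    (fun k hk => by
      simp only [mem_sdiff, mem_univ, mem_Iic, Fin.le_def, true_and, not_le] at hk
      exact (hhi k (by omega)).trans (hv (by simpa using hi) (by simp; omega) (by omega)))
  rw [Fin.card_Iic, pow_succ] at hsign
  simpa [eval_prod, eval_nodal_at_node (mem_range.2 hi)] using hsign

section Frobenius

variable {n : ℕ}

/-- The coefficients of `X ^ (n - 1), …, X ^ 0`: in these coordinates `frobeniusMatrix n p` acts
on row vectors as multiplication by `X` modulo `p`. -/
noncomputable def revCoeffs (R : Type*) [CommRing R] (n : ℕ) : R[X] →ₗ[R] Fin n → R :=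
  LinearMap.pi fun k => lcoeff R (n - 1 - k)

@[simp]
theorem revCoeffs_apply {R : Type*} [CommRing R] (q : R[X]) (k : Fin n) :
    revCoeffs R n q k = q.coeff (n - 1 - k) := rfl

noncomputable def revCoeffsMatrix {R : Type*} [CommRing R] (b : Fin n → R[X]) :
    Matrix (Fin n) (Fin n) R :=
  Matrix.of fun i => revCoeffs R n (b i)

theorem revCoeffs_vecMul_frobeniusMatrix (p q : ℝ[X]) :
    revCoeffs ℝ n q ᵥ* frobeniusMatrix n p = revCoeffs ℝ n (X * q - C (q.coeff (n - 1)) * p) := by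
  ext j
  have hsplit : ∀ k : Fin n, frobeniusMatrix n p k j =
      (if (k : ℕ) = 0 then -p.coeff (n - 1 - j) else 0) + (if (k : ℕ) = j + 1 then 1 else 0) := by
    intro k
    simp only [frobeniusMatrix, Matrix.of_apply]
    split_ifs <;> simp_all
  simp only [vecMul, dotProduct, revCoeffs_apply, hsplit, mul_add, sum_add_distrib]
  rw [Fin.sum_univ_eq_sum_range (fun k => q.coeff (n - 1 - k) * ite (k = 0) _ 0),
    Fin.sum_univ_eq_sum_range (fun k => q.coeff (n - 1 - k) * ite (k = j + 1) 1 0)]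
  simp only [mul_ite, mul_zero, sum_ite_eq', mem_range, if_pos j.pos, Nat.sub_zero, mul_one,
    coeff_sub, coeff_C_mul]
  split_ifs with hj
  · rw [show n - 1 - j = n - 1 - (j + 1) + 1 by omega, coeff_X_mul]
    ring
  · rw [show n - 1 - j = 0 by omega, coeff_X_mul_zero]
    ring

theorem revCoeffsMatrix_mul_frobeniusMatrix {p : ℝ[X]} {b : Fin n → ℝ[X]}
    {A : Matrix (Fin n) (Fin n) ℝ}
    (hA : ∀ i, X * b i - C ((b i).coeff (n - 1)) * p = ∑ k, A i k • b k) :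
    revCoeffsMatrix b * frobeniusMatrix n p = A * revCoeffsMatrix b := by
  ext i j
  calc _ = (revCoeffs ℝ n (b i) ᵥ* frobeniusMatrix n p) j := rfl
    _ = _ := by simp [revCoeffsMatrix, revCoeffs_vecMul_frobeniusMatrix, hA, mul_apply]

theorem isUnit_det_revCoeffsMatrix {R : Type*} [CommRing R] {b : Fin n → R[X]}
    (hb : ∀ i, (b i).Monic) (hdeg : ∀ i, (b i).natDegree = i) :
    IsUnit (revCoeffsMatrix b).det := by
  set B := revCoeffsMatrix b
  have hrev : ∀ i j : Fin n, B.submatrix id Fin.revPerm i j = (b i).coeff j := by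
    intro i j
    simp only [B, revCoeffsMatrix, submatrix_apply, of_apply, revCoeffs_apply, id,
      Fin.revPerm_apply, Fin.val_rev]
    congr 1
    omega
  have htri : (B.submatrix id Fin.revPerm).IsLowerTriangular := fun i j hij => by
    rw [hrev]
    exact coeff_eq_zero_of_natDegree_lt (by rw [hdeg]; exact hij)
  have hdet : (B.submatrix id Fin.revPerm).det = 1 := by
    rw [det_of_isLowerTriangular _ htri]
    exact prod_eq_one fun i _ => by rw [hrev, ← hdeg i]; exact hb i
  rw [det_permute'] at hdet
  exact IsUnit.of_mul_eq_one_right _ hdet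

theorem mulVec_eval_le_of_eq_sum {p : ℝ[X]} {b : Fin n → ℝ[X]} {A : Matrix (Fin n) (Fin n) ℝ}
    (hA : ∀ i, X * b i - C ((b i).coeff (n - 1)) * p = ∑ k, A i k • b k)
    (hb : ∀ i, 0 ≤ (b i).coeff (n - 1)) {t : ℝ} (hp : 0 ≤ p.eval t) :
    A *ᵥ (fun k => (b k).eval t) ≤ t • fun k => (b k).eval t := by
  intro i
  have h := congrArg (eval t) (hA i)
  simp only [eval_sub, eval_mul, eval_X, eval_C, eval_finsetSum, eval_smul, smul_eq_mul] at h
  simp only [mulVec, dotProduct, Pi.smul_apply, smul_eq_mul, ← h]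
  exact sub_le_self _ (mul_nonneg (hb i) hp)

/-- The matrix of multiplication by `X` modulo `p` in the Newton basis `nodal (range k) v`,
where `d` are the Newton coefficients of `nodal (range n) v - p`. -/
noncomputable def newtonMulMatrix (n : ℕ) (v d : ℕ → ℝ) : Matrix (Fin n) (Fin n) ℝ :=
  Matrix.of fun i k => (if k = i then v i else 0) +
    if (i : ℕ) + 1 < n then (if (k : ℕ) = i + 1 then 1 else 0) else d k

theorem X_mul_nodal_range_sub_eq_sum_newtonMulMatrix {v d : ℕ → ℝ} {p : ℝ[X]}
    (hd : nodal (range n) v - p = ∑ k ∈ range n, C (d k) * nodal (range k) v) (i : Fin n) :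
    X * nodal (range i) v - C ((nodal (range i) v).coeff (n - 1)) * p =
      ∑ k : Fin n, newtonMulMatrix n v d i k • nodal (range k) v := by
  simp only [newtonMulMatrix, of_apply, add_smul, ite_smul, zero_smul, one_smul,
    sum_add_distrib, sum_ite_eq', mem_univ, if_true, X_mul_nodal_range, smul_eq_C_mul]
  split_ifs with hi
  · rw [coeff_eq_zero_of_natDegree_lt (by simp; omega), C_0, zero_mul, sub_zero,
      Fin.sum_univ_eq_sum_range (fun k => if k = i + 1 then nodal (range k) v else 0),
      sum_ite_eq', if_pos (mem_range.2 hi), add_comm]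
  · rw [show n - 1 = i by omega, coeff_nodal_range_self, C_1, one_mul,
      Fin.sum_univ_eq_sum_range (fun k => C (d k) * nodal (range k) v), ← hd,
      show (i : ℕ) + 1 = n by omega]
    ring

theorem newtonMulMatrix_nonneg {v d : ℕ → ℝ} (hv : ∀ k < n, 0 ≤ v k) (hd : ∀ k < n, 0 ≤ d k)
    (i k : Fin n) : 0 ≤ newtonMulMatrix n v d i k := by
  simp only [newtonMulMatrix, of_apply]
  have := hv i i.isLt
  have := hd k k.isLt
  split_ifs <;> positivity

theorem coeff_nodal_range_nonneg (v : ℕ → ℝ) (i : Fin n) :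
    0 ≤ (nodal (range i) v).coeff (n - 1) := by
  rcases (Nat.le_sub_one_of_lt i.isLt).lt_or_eq with h | h
  · rw [coeff_eq_zero_of_natDegree_lt (by simpa using h)]
  · rw [← h, coeff_nodal_range_self]
    exact zero_le_one

theorem exists_nonneg_revCoeffsMatrix_mul_frobeniusMatrix {v : ℕ → ℝ}
    (hv : StrictAntiOn v (Set.Iio n)) (hv0 : ∀ k < n, 0 ≤ v k) {lam : Fin n → ℝ}
    (hlo : ∀ k : Fin n, v k ≤ lam k) (hhi : ∀ k : Fin n, 0 < (k : ℕ) → lam k ≤ v (k - 1))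
    {t : ℝ} (ht : ∀ k, lam k ≤ t) :
    ∃ A : Matrix (Fin n) (Fin n) ℝ, (∀ i j, 0 ≤ A i j) ∧
      A *ᵥ (fun k : Fin n => (nodal (range k) v).eval t) ≤
        t • (fun k : Fin n => (nodal (range k) v).eval t) ∧
      revCoeffsMatrix (fun i : Fin n => nodal (range i) v) *
          frobeniusMatrix n (∏ k, (X - C (lam k))) =
        A * revCoeffsMatrix (fun i : Fin n => nodal (range i) v) := by
  have hdeg : (nodal (range n) v - nodal univ lam).degree < n := by
    simpa using degree_nodal_sub_nodal_lt v lam (s := range n) (s' := univ) (by simp)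
  obtain ⟨d, hd⟩ := exists_eq_sum_nodal_range v hdeg
  have hd0 : ∀ k < n, 0 ≤ d k := fun k hk => nonneg_of_eq_sum_nodal_range hv hd
    (fun i hi => by simpa [nodal_eq] using
      neg_one_pow_mul_eval_nodal_sub_prod_nonneg hv.antitoneOn hlo hhi hi) hk
  have hA := X_mul_nodal_range_sub_eq_sum_newtonMulMatrix hd
  rw [← nodal_eq]
  refine ⟨newtonMulMatrix n v d, newtonMulMatrix_nonneg hv0 hd0,
    mulVec_eval_le_of_eq_sum hA (coeff_nodal_range_nonneg v) ?_,
    revCoeffsMatrix_mul_frobeniusMatrix hA⟩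
  rw [eval_nodal]
  exact prod_nonneg fun k _ => sub_nonneg.2 (ht k)

end Frobenius

section Norms

variable {n : ℕ}

theorem matrixL2OpNorm_mul (A B : Matrix (Fin n) (Fin n) ℝ) :
    matrixL2OpNorm (A * B) ≤ matrixL2OpNorm A * matrixL2OpNorm B :=
  open scoped Matrix.Norms.L2Operator in l2_opNorm_mul A B

theorem EuclideanSpace.norm_le_sum_abs {ι : Type*} [Fintype ι] (x : EuclideanSpace ℝ ι) :
    ‖x‖ ≤ ∑ i, |x i| := by
  rw [EuclideanSpace.norm_eq, ← Real.sqrt_sq (sum_nonneg fun i _ => abs_nonneg (x i))]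
  exact Real.sqrt_le_sqrt (by simpa using sum_sq_le_sq_sum_of_nonneg fun i _ => abs_nonneg (x i))

theorem matrixL2OpNorm_le_sum_abs (M : Matrix (Fin n) (Fin n) ℝ) :
    matrixL2OpNorm M ≤ ∑ i, ∑ j, |M i j| := by
  refine ContinuousLinearMap.opNorm_le_bound _ (by positivity) fun x => ?_
  refine (EuclideanSpace.norm_le_sum_abs _).trans ?_
  simp only [LinearMap.coe_toContinuousLinearMap', toLpLin_apply, sum_mul, mulVec, dotProduct]
  refine sum_le_sum fun i _ => (abs_sum_le_sum_abs _ _).trans (sum_le_sum fun j _ => ?_)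
  rw [abs_mul]
  exact mul_le_mul_of_nonneg_left (by simpa using PiLp.norm_apply_le x j) (abs_nonneg _)

theorem Matrix.mulVec_mono_of_nonneg {A : Matrix (Fin n) (Fin n) ℝ} (hA : ∀ i j, 0 ≤ A i j)
    {x y : Fin n → ℝ} (hxy : x ≤ y) : A *ᵥ x ≤ A *ᵥ y := fun i => by
  simp only [mulVec, dotProduct]
  exact sum_le_sum fun j _ => mul_le_mul_of_nonneg_left (hxy j) (hA i j)

theorem list_prod_nonneg_and_mulVec_le {w : Fin n → ℝ} {t : ℝ} (ht : 0 ≤ t)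
    (l : List (Matrix (Fin n) (Fin n) ℝ)) (hl : ∀ A ∈ l, (∀ i j, 0 ≤ A i j) ∧ A *ᵥ w ≤ t • w) :
    (∀ i j, 0 ≤ l.prod i j) ∧ l.prod *ᵥ w ≤ t ^ l.length • w := by
  induction l with
  | nil =>
    refine ⟨fun i j => ?_, by simp⟩
    rw [List.prod_nil, one_apply]
    split_ifs <;> norm_num
  | cons A l ih =>
    obtain ⟨hA, hAw⟩ := hl A List.mem_cons_self
    obtain ⟨hP, hPw⟩ := ih fun B hB => hl B (List.mem_cons_of_mem _ hB)
    refine ⟨fun i j => ?_, ?_⟩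
    · rw [List.prod_cons, mul_apply]
      exact sum_nonneg fun k _ => mul_nonneg (hA i k) (hP k j)
    · calc (A * l.prod) *ᵥ w = A *ᵥ (l.prod *ᵥ w) := (mulVec_mulVec _ _ _).symm
        _ ≤ A *ᵥ (t ^ l.length • w) := mulVec_mono_of_nonneg hA hPw
        _ = t ^ l.length • A *ᵥ w := mulVec_smul _ _ _
        _ ≤ t ^ l.length • t • w := smul_le_smul_of_nonneg_left hAw (pow_nonneg ht _)
        _ = t ^ (A :: l).length • w := by rw [smul_smul, ← pow_succ, List.length_cons]

theorem matrixL2OpNorm_le_of_mulVec_le {M : Matrix (Fin n) (Fin n) ℝ} (hM : ∀ i j, 0 ≤ M i j)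
    {w : Fin n → ℝ} (hw : ∀ i, 0 < w i) {s : ℝ} (hMw : M *ᵥ w ≤ s • w) :
    matrixL2OpNorm M ≤ s * ∑ i, ∑ j, w i / w j := by
  refine (matrixL2OpNorm_le_sum_abs M).trans ?_
  simp only [mul_sum]
  refine sum_le_sum fun i _ => sum_le_sum fun j _ => ?_
  rw [abs_of_nonneg (hM i j), ← mul_div_assoc, le_div_iff₀ (hw j)]
  calc M i j * w j ≤ ∑ k, M i k * w k :=
        single_le_sum (f := fun k => M i k * w k) (fun k _ => mul_nonneg (hM i k) (hw k).le)
          (mem_univ j)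
    _ ≤ s * w i := hMw i

end Norms

theorem SemiconjBy.list_prod_ofFn {M : Type*} [Monoid M] {a : M} {m : ℕ} {x y : Fin m → M}
    (h : ∀ i, SemiconjBy a (x i) (y i)) : SemiconjBy a (List.ofFn x).prod (List.ofFn y).prod := by
  induction m with
  | zero => exact SemiconjBy.one_right a
  | succ m ih =>
    simp only [List.ofFn_succ, List.prod_cons]
    exact (h 0).mul_right (ih fun i => h i.succ)

theorem matrixL2OpNorm_list_prod_le_of_semiconjBy {n m : ℕ}
    {F A : Fin m → Matrix (Fin n) (Fin n) ℝ} {B : Matrix (Fin n) (Fin n) ℝ} (hB : IsUnit B.det)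
    (hBF : ∀ i, B * F i = A i * B) (hA : ∀ i j k, 0 ≤ A i j k) {w : Fin n → ℝ}
    (hw : ∀ j, 0 < w j) {t : ℝ} (ht : 0 ≤ t) (hAw : ∀ i, A i *ᵥ w ≤ t • w) :
    matrixL2OpNorm (List.ofFn F).prod ≤
      matrixL2OpNorm B⁻¹ * matrixL2OpNorm B * (∑ i, ∑ j, w i / w j) * t ^ m := by
  have hconj : B * (List.ofFn F).prod = (List.ofFn A).prod * B := SemiconjBy.list_prod_ofFn hBF
  have hprod : (List.ofFn F).prod = B⁻¹ * (List.ofFn A).prod * B := by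
    rw [mul_assoc, ← hconj, ← mul_assoc, nonsing_inv_mul _ hB, one_mul]
  obtain ⟨hP, hPw⟩ := list_prod_nonneg_and_mulVec_le ht (List.ofFn A)
    (by simpa using fun i => ⟨hA i, hAw i⟩)
  rw [List.length_ofFn] at hPw
  have hPnorm := matrixL2OpNorm_le_of_mulVec_le hP hw hPw
  rw [hprod]
  calc _ ≤ matrixL2OpNorm B⁻¹ * matrixL2OpNorm (List.ofFn A).prod * matrixL2OpNorm B :=
        (matrixL2OpNorm_mul _ _).trans
          (mul_le_mul_of_nonneg_right (matrixL2OpNorm_mul _ _) (norm_nonneg _))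
    _ ≤ matrixL2OpNorm B⁻¹ * (t ^ m * ∑ i, ∑ j, w i / w j) * matrixL2OpNorm B := by
        gcongr
        · exact norm_nonneg _
        · exact norm_nonneg _
    _ = _ := by ring

theorem exists_matrixL2OpNorm_prod_frobeniusMatrix_le {n : ℕ} {v : ℕ → ℝ}
    (hv : StrictAntiOn v (Set.Iio n)) (hv0 : ∀ k < n, 0 ≤ v k) {t : ℝ} (ht : 0 ≤ t)
    (hvt : ∀ k < n, v k < t) :
    ∃ K : ℝ, ∀ m (lam : Fin m → Fin n → ℝ),
      (∀ i (k : Fin n), v k ≤ lam i k ∧ lam i k ≤ t ∧ (0 < (k : ℕ) → lam i k ≤ v (k - 1))) →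
      matrixL2OpNorm (List.ofFn fun i => frobeniusMatrix n (∏ k, (X - C (lam i k)))).prod ≤
        K * t ^ m := by
  set B := revCoeffsMatrix fun i : Fin n => nodal (range i) v
  set w := fun k : Fin n => (nodal (range k) v).eval t
  have hw : ∀ k, 0 < w k := fun k => by
    simp only [w, eval_nodal]
    exact prod_pos fun l hl => sub_pos.2 (hvt l (by simp at hl; omega))
  refine ⟨matrixL2OpNorm B⁻¹ * matrixL2OpNorm B * ∑ i, ∑ j, w i / w j, fun m lam hlam => ?_⟩
  choose A hA0 hAw hBA using fun i => exists_nonneg_revCoeffsMatrix_mul_frobeniusMatrix hv hv0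
    (fun k => (hlam i k).1) (fun k => (hlam i k).2.2) (fun k => (hlam i k).2.1)
  exact matrixL2OpNorm_list_prod_le_of_semiconjBy
    (isUnit_det_revCoeffsMatrix (fun _ => nodal_monic) (natDegree_nodal_range v ·))
    hBA hA0 hw ht hAw

theorem frobenius_product_contraction_general (n : ℕ) (μ : Fin (n + 1) → ℝ)
    (hμ1 : μ 0 < 1) (hμpos : 0 < μ (Fin.last n)) (hμanti : StrictAnti μ) :
    ∃ C c : ℝ, 0 < C ∧ 0 < c ∧ c < 1 ∧
      ∀ m : ℕ, 1 ≤ m → ∀ lam : Fin m → Fin n → ℝ,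
        (∀ i k, lam i k ≤ μ k.castSucc ∧ μ k.succ ≤ lam i k) →
        matrixL2OpNorm
            ((List.ofFn fun i : Fin m =>
              frobeniusMatrix n (∏ k, (X - Polynomial.C (lam i k)))).prod) ≤
          C * c ^ m := by
  set t := (μ 0 + 1) / 2 with ht
  have hμ0 : 0 < μ 0 := hμpos.trans_le (hμanti.antitone (Fin.zero_le _))
  have hμt : ∀ j, μ j < t := fun j =>
    (hμanti.antitone (Fin.zero_le j)).trans_lt (by rw [ht]; linarith)
  set v : ℕ → ℝ := fun k => μ (Fin.ofNat (n + 1) (k + 1))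
  have hv : ∀ k (hk : k < n), v k = μ ⟨k + 1, by omega⟩ := fun k hk =>
    congrArg μ (Fin.ext (Nat.mod_eq_of_lt (by omega)))
  obtain ⟨K, hK⟩ := exists_matrixL2OpNorm_prod_frobeniusMatrix_le (v := v) (t := t)
    (fun i (hi : i < n) j (hj : j < n) hij => by rw [hv i hi, hv j hj]; exact hμanti (by simpa))
    (fun k hk => by rw [hv k hk]; exact (hμpos.trans_le (hμanti.antitone (Fin.le_last _))).le)
    (by rw [ht]; linarith) (fun k hk => by rw [hv k hk]; exact hμt _)
  refine ⟨max K 1, t, by positivity, by rw [ht]; linarith, by rw [ht]; linarith,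
    fun m _ lam hlam => ?_⟩
  refine (hK m lam fun i k => ⟨?_, (hlam i k).1.trans (hμt _).le, fun hk => ?_⟩).trans ?_
  · rw [hv k k.isLt]
    exact (hlam i k).2
  · rw [hv (k - 1) (by omega)]
    convert (hlam i k).1 using 2
    ext
    simp only [Fin.val_castSucc]
    omega
  · gcongr
    exact le_max_left _ _

/-- **Frobenius matrices lemma.** If `1 > μ₁ > ⋯ > μ_{n+1} > 0`, then there are
`C > 0` and `c ∈ (0,1)`, depending only on the `μ`'s, such that for any monic polynomials
`p₁, …, p_m` whose zeroes interlace the `μ_k`'s, `‖F(p₁)⋯F(p_m)‖ ≤ C cᵐ`. -/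
theorem frobenius_product_contraction (n : ℕ) (hn : 1 ≤ n) (μ : Fin (n + 1) → ℝ)
    (hμ1 : μ 0 < 1) (hμpos : 0 < μ (Fin.last n)) (hμanti : StrictAnti μ) :
    ∃ C c : ℝ, 0 < C ∧ 0 < c ∧ c < 1 ∧
      ∀ m : ℕ, 1 ≤ m → ∀ lam : Fin m → Fin n → ℝ,
        (∀ i k, lam i k ≤ μ k.castSucc ∧ μ k.succ ≤ lam i k) →
        matrixL2OpNorm
            ((List.ofFn fun i : Fin m =>
              frobeniusMatrix n (∏ k, (X - Polynomial.C (lam i k)))).prod) ≤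
          C * c ^ m :=
  frobenius_product_contraction_general n μ hμ1 hμpos hμanti
end

section
/- Let n ≥ 1, let 1 > μ₁ > ⋯ > μ_{n+1} > 0, and let a₁,…,a_{n+1} be nonzero reals such that Σ_{k=1}^{n+1} a_k q(μ_k) = 0 for every real polynomial q of degree less than n. Define the norm ‖q‖_μ = Σ_{k=1}^{n+1} |a_k q(μ_k)| on the space of real polynomials of degree less than n. Fix l ∈ {1,…,n+1}, let p_l(x) = Π_{k≠l}(x − μ_k), and for a polynomial q of degree less than n let r(x) be the remainder of x·q(x) after division by p_l(x). Then ‖r‖_μ ≤ μ₁ ‖q‖_μ. -/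
open Polynomial Finset

/-!
At every node `μ k` with `k ≠ l` the divisor `p_l` vanishes, so the remainder satisfies
`r(μ k) = μ k q(μ k)`; only the value at `μ l` is unknown. Since both `r` and `q` have degree
`< n`, the weighted sums `Σ a_k r(μ_k)` and `Σ a_k q(μ_k)` vanish, hence so does
`Σ a_k (r(μ_k) - μ₁ q(μ_k))`. So its `l`-th term is at most the sum of the absolute values of
the others, `(μ₁ - μ_k) |a_k q(μ_k)|`, and these exactly fill the room left by `μ_k ≤ μ₁` in the
terms `k ≠ l` of `‖r‖_μ`.
-/

theorem abs_le_sum_erase_abs_of_sum_eq_zero {ι : Type*} [Fintype ι] [DecidableEq ι]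
    {f : ι → ℝ} (hf : ∑ k, f k = 0) (l : ι) : |f l| ≤ ∑ k ∈ univ.erase l, |f k| := by
  have hl : f l = -∑ k ∈ univ.erase l, f k := by
    rw [sum_erase_eq_sub (mem_univ l), hf]; ring
  rw [hl, abs_neg]
  exact abs_sum_le_sum_abs _ _

theorem sum_abs_le_mul_sum_abs_of_eq_mul_of_ne {ι : Type*} [Fintype ι] [DecidableEq ι]
    {s w c : ι → ℝ} {M : ℝ} (l : ι) (hs : ∑ k, s k = 0) (hw : ∑ k, w k = 0)
    (hsw : ∀ k ≠ l, s k = c k * w k) (hc : ∀ k, 0 ≤ c k) (hcM : ∀ k, c k ≤ M) :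
    ∑ k, |s k| ≤ M * ∑ k, |w k| := by
  have hM : 0 ≤ M := (hc l).trans (hcM l)
  have hdefect : ∑ k, (s k - M * w k) = 0 := by
    rw [sum_sub_distrib, ← mul_sum, hs, hw]; ring
  have hdefect_abs : ∀ k ∈ univ.erase l, |s k - M * w k| = (M - c k) * |w k| := by
    intro k hk
    rw [hsw k (ne_of_mem_erase hk), ← sub_mul, abs_mul, abs_sub_comm,
      abs_of_nonneg (sub_nonneg.2 (hcM k))]
  have hsl : |s l| ≤ M * |w l| + ∑ k ∈ univ.erase l, (M - c k) * |w k| := by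
    have hdefect_l := abs_le_sum_erase_abs_of_sum_eq_zero hdefect l
    rw [sum_congr rfl hdefect_abs] at hdefect_l
    calc |s l| = |M * w l + (s l - M * w l)| := by rw [add_sub_cancel]
      _ ≤ |M * w l| + |s l - M * w l| := abs_add_le _ _
      _ ≤ M * |w l| + ∑ k ∈ univ.erase l, (M - c k) * |w k| := by
        rw [abs_mul, abs_of_nonneg hM]; gcongr
  calc ∑ k, |s k| = |s l| + ∑ k ∈ univ.erase l, c k * |w k| := by
        rw [← add_sum_erase _ _ (mem_univ l)]
        congr 1
        refine sum_congr rfl fun k hk => ?_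
        rw [hsw k (ne_of_mem_erase hk), abs_mul, abs_of_nonneg (hc k)]
    _ ≤ M * |w l| + ∑ k ∈ univ.erase l, (M - c k) * |w k|
          + ∑ k ∈ univ.erase l, c k * |w k| := by gcongr
    _ = M * ∑ k, |w k| := by
        rw [add_assoc, ← sum_add_distrib, ← add_sum_erase _ _ (mem_univ l), mul_add, mul_sum]
        congr 1
        exact sum_congr rfl fun k _ => by ring

theorem eval_X_mul_modByMonic_nodal {R ι : Type*} [CommRing R] {s : Finset ι} {v : ι → R}
    (q : R[X]) {i : ι} (hi : i ∈ s) :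
    ((X * q) %ₘ Lagrange.nodal s v).eval (v i) = v i * q.eval (v i) := by
  have h := eval₂_modByMonic_eq_self_of_root (p := X * q) (f := RingHom.id R)
    (Lagrange.eval_nodal_at_node (v := v) hi)
  simpa only [eval₂_id, eval_mul, eval_X] using h

theorem interpolation_norm_contraction_general (n : ℕ) (μ : Fin (n + 1) → ℝ)
    (hμpos : 0 < μ (Fin.last n)) (hμanti : StrictAnti μ)
    (a : Fin (n + 1) → ℝ)
    (hsum : ∀ q : Polynomial ℝ, q.degree < n → ∑ k, a k * q.eval (μ k) = 0)
    (l : Fin (n + 1)) (q : Polynomial ℝ) (hq : q.degree < n) :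
    ∑ k, |a k * ((X * q) %ₘ (∏ j ∈ Finset.univ.erase l, (X - Polynomial.C (μ j)))).eval (μ k)|
      ≤ μ 0 * ∑ k, |a k * q.eval (μ k)| := by
  rw [← Lagrange.nodal_eq]
  have hr : ((X * q) %ₘ Lagrange.nodal (univ.erase l) μ).degree < n := by
    simpa [Lagrange.degree_nodal] using
      degree_modByMonic_lt (X * q) (Lagrange.nodal_monic (s := univ.erase l) (v := μ))
  refine sum_abs_le_mul_sum_abs_of_eq_mul_of_ne l (hsum _ hr) (hsum q hq) (fun k hk => ?_)
    (fun k => (hμpos.trans_le (hμanti.antitone k.le_last)).le)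
    (fun k => hμanti.antitone k.zero_le)
  rw [eval_X_mul_modByMonic_nodal q (mem_erase.2 ⟨hk, mem_univ k⟩)]
  ring

/-- **contractivity of the interpolation norm.** Suppose
`1 > μ₁ > ⋯ > μ_{n+1} > 0`, the nonzero reals `a_k` satisfy `Σ a_k q(μ_k) = 0` for every
polynomial `q` of degree `< n`, `‖q‖_μ = Σ |a_k q(μ_k)|`, `p_l(x) = Π_{k≠l}(x - μ_k)`, and
`r` is the remainder of `x·q(x)` modulo `p_l`. Then `‖r‖_μ ≤ μ₁ ‖q‖_μ`. -/
theorem interpolation_norm_contraction (n : ℕ) (hn : 1 ≤ n) (μ : Fin (n + 1) → ℝ)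
    (hμ1 : μ 0 < 1) (hμpos : 0 < μ (Fin.last n)) (hμanti : StrictAnti μ)
    (a : Fin (n + 1) → ℝ) (ha : ∀ k, a k ≠ 0)
    (hsum : ∀ q : Polynomial ℝ, q.degree < n → ∑ k, a k * q.eval (μ k) = 0)
    (l : Fin (n + 1)) (q : Polynomial ℝ) (hq : q.degree < n) :
    ∑ k, |a k * ((X * q) %ₘ (∏ j ∈ Finset.univ.erase l, (X - Polynomial.C (μ j)))).eval (μ k)|
      ≤ μ 0 * ∑ k, |a k * q.eval (μ k)| :=
  interpolation_norm_contraction_general n μ hμpos hμanti a hsum l q hq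
end

section
/- Let I be a finite index set and let x_k ∈ ℝ and s_k ∈ [0,1] for k ∈ I. Then Σ_{k∈I} |s_k x_k| + |Σ_{k∈I} s_k x_k| ≤ Σ_{k∈I} |x_k| + |Σ_{k∈I} x_k|. -/
/-! Write `Σ sₖ xₖ = Σ xₖ - Σ (1 - sₖ) xₖ`. The triangle inequality bounds the norm of the
weighted sum by `‖Σ xₖ‖ + Σ (1 - sₖ) ‖xₖ‖`, and adding `Σ ‖sₖ xₖ‖ = Σ sₖ ‖xₖ‖` turns the
weights `sₖ + (1 - sₖ)` into `1`. -/

open Finset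

section NormedSpace

variable {ι E : Type*} [SeminormedAddCommGroup E] [NormedSpace ℝ E] {I : Finset ι}
  {x : ι → E} {s : ι → ℝ}

theorem norm_sum_smul_le_norm_sum_add (hs : ∀ k ∈ I, s k ≤ 1) :
    ‖∑ k ∈ I, s k • x k‖ ≤ ‖∑ k ∈ I, x k‖ + ∑ k ∈ I, (1 - s k) * ‖x k‖ := by
  have hsplit : ∑ k ∈ I, s k • x k = ∑ k ∈ I, x k - ∑ k ∈ I, (1 - s k) • x k := by
    rw [← sum_sub_distrib]
    exact sum_congr rfl fun k _ => by rw [sub_smul, one_smul, sub_sub_cancel]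
  calc ‖∑ k ∈ I, s k • x k‖
      ≤ ‖∑ k ∈ I, x k‖ + ‖∑ k ∈ I, (1 - s k) • x k‖ := hsplit ▸ norm_sub_le _ _
    _ ≤ ‖∑ k ∈ I, x k‖ + ∑ k ∈ I, ‖(1 - s k) • x k‖ := by gcongr; exact norm_sum_le _ _
    _ = ‖∑ k ∈ I, x k‖ + ∑ k ∈ I, (1 - s k) * ‖x k‖ := by
      congr 1
      refine sum_congr rfl fun k hk => ?_
      rw [norm_smul, Real.norm_of_nonneg (sub_nonneg.2 (hs k hk))]

theorem sum_norm_smul_add_norm_sum_smul_le (hs : ∀ k ∈ I, s k ∈ Set.Icc (0 : ℝ) 1) :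
    ∑ k ∈ I, ‖s k • x k‖ + ‖∑ k ∈ I, s k • x k‖ ≤ ∑ k ∈ I, ‖x k‖ + ‖∑ k ∈ I, x k‖ := by
  have hnorm : ∑ k ∈ I, ‖s k • x k‖ = ∑ k ∈ I, s k * ‖x k‖ :=
    sum_congr rfl fun k hk => by rw [norm_smul, Real.norm_of_nonneg (hs k hk).1]
  have hweights : ∑ k ∈ I, s k * ‖x k‖ + ∑ k ∈ I, (1 - s k) * ‖x k‖ = ∑ k ∈ I, ‖x k‖ := by
    rw [← sum_add_distrib]
    exact sum_congr rfl fun k _ => by ring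
  linarith [norm_sum_smul_le_norm_sum_add (x := x) fun k hk => (hs k hk).2]

end NormedSpace

/-- For reals `x_k` and weights `s_k ∈ [0,1]`, `k` in a finite index set,
`Σ |s_k x_k| + |Σ s_k x_k| ≤ Σ |x_k| + |Σ x_k|`. -/
theorem abs_sum_weighted_le {ι : Type*} (I : Finset ι) (x s : ι → ℝ)
    (hs : ∀ k ∈ I, s k ∈ Set.Icc (0 : ℝ) 1) :
    (∑ k ∈ I, |s k * x k|) + |∑ k ∈ I, s k * x k| ≤
      (∑ k ∈ I, |x k|) + |∑ k ∈ I, x k| := by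
  simpa only [Real.norm_eq_abs, smul_eq_mul] using sum_norm_smul_add_norm_sum_smul_le (x := x) hs
end

section
/- Let α > 0 and let g(t) = Σ_{k=1}^N a_k/(t − i w_k) with a_k ∈ ℂ nonzero and Re w_k ≠ Re w_l for k ≠ l. Then for every θ ∈ ℝ, the N×N matrix B with entries B_{j,s} = m_s(θ − j), for j = 0,…,N−1 (row index) and s = 0,…,N−1 (column index), satisfies det B ≠ 0. -/
/-!
Writing `y k = exp (2π w k / α)` and `x k = exp (-2π w k)`, the matrix factors as
`B = Vᵀ · diag (a k e^{2πθ w k}) · L`, where `V` is the Vandermonde matrix of `x` and row `k` of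
`L` holds the coefficients of `∏_{j ≠ k} (X - y j)`. Distinct real parts make `x` and `y`
injective, so `V` is invertible, and `L` is invertible because evaluating its rows at the points
`y k'` gives the Lagrange identity `L · W = diag (∏_{j ≠ k} (y k - y j))` with
`W s k' = y k' ^ (N - 1 - s)`.
-/

open Complex Real

/-- `A_{k,s} = (-1)^s Σ_{j₁<⋯<j_s, j_l ≠ k} e^{(2π/α)(w_{j₁}+⋯+w_{j_s})}`. -/
noncomputable def gaborAks (N : ℕ) (w : Fin N → ℂ) (α : ℝ) (k : Fin N) (s : ℕ) : ℂ :=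
  (-1) ^ s * ∑ S ∈ Finset.powersetCard s (Finset.univ.erase k),
    Complex.exp (((2 * Real.pi / α : ℝ) : ℂ) * ∑ j ∈ S, w j)

/-- `m_s(ξ) = Σ_{k=1}^N a_k A_{k,s} e^{2πξ w_k}`. -/
noncomputable def gaborM (N : ℕ) (a w : Fin N → ℂ) (α : ℝ) (s : ℕ) (ξ : ℝ) : ℂ :=
  ∑ k, a k * gaborAks N w α k s * Complex.exp (((2 * Real.pi * ξ : ℝ) : ℂ) * w k)

open Finset Matrix

section LagrangeCoeff

variable {R : Type*} [CommRing R]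

theorem Finset.prod_sub_eq_sum_powersetCard {ι : Type*} [DecidableEq ι] (T : Finset ι)
    (y : ι → R) (z : R) :
    ∏ j ∈ T, (z - y j) =
      ∑ s ∈ range (#T + 1), ∑ S ∈ powersetCard s T, (-1) ^ s * (∏ j ∈ S, y j) * z ^ (#T - s) := by
  calc ∏ j ∈ T, (z - y j)
      = ∑ S ∈ T.powerset, (-1) ^ #S * (∏ j ∈ S, y j) * z ^ (#T - #S) := by
        simp_rw [sub_eq_neg_add, prod_add, prod_const]
        refine sum_congr rfl fun S hS => ?_
        rw [card_sdiff_of_subset (mem_powerset.1 hS), prod_neg]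
    _ = _ := by
        rw [sum_powerset]
        exact sum_congr rfl fun s _ => sum_congr rfl fun S hS => by
          rw [(mem_powersetCard.1 hS).2]

/-- Row `k` lists the coefficients of `∏_{j ≠ k} (X - y j)`, from the leading one down. -/
def lagrangeCoeffMatrix {n : ℕ} (y : Fin n → R) : Matrix (Fin n) (Fin n) R :=
  of fun k s => (-1) ^ (s : ℕ) * ∑ S ∈ powersetCard s (univ.erase k), ∏ j ∈ S, y j

theorem lagrangeCoeffMatrix_mul_pow {n : ℕ} (y : Fin n → R) (k : Fin n) (z : R) :
    ∑ s : Fin n, lagrangeCoeffMatrix y k s * z ^ (n - 1 - s) = ∏ j ∈ univ.erase k, (z - y j) := by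
  have hcard : #(univ.erase k) = n - 1 := by simp
  rw [prod_sub_eq_sum_powersetCard, hcard, Nat.sub_add_cancel k.pos,
    ← Fin.sum_univ_eq_sum_range (fun s => ∑ S ∈ powersetCard s (univ.erase k),
      (-1) ^ s * (∏ j ∈ S, y j) * z ^ (n - 1 - s))]
  simp only [lagrangeCoeffMatrix, of_apply, mul_sum, sum_mul]

theorem det_lagrangeCoeffMatrix_ne_zero [IsDomain R] {n : ℕ} {y : Fin n → R}
    (hy : Function.Injective y) : (lagrangeCoeffMatrix y).det ≠ 0 := by
  let W : Matrix (Fin n) (Fin n) R := of fun s k => y k ^ (n - 1 - s)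
  have hLW : lagrangeCoeffMatrix y * W = diagonal fun k => ∏ j ∈ univ.erase k, (y k - y j) := by
    ext k k'
    rw [mul_apply]
    simp only [W, of_apply, lagrangeCoeffMatrix_mul_pow]
    rcases eq_or_ne k k' with rfl | hkk'
    · rw [diagonal_apply_eq]
    · rw [diagonal_apply_ne _ hkk']
      exact prod_eq_zero (mem_erase.2 ⟨hkk'.symm, mem_univ k'⟩) (sub_self _)
  have hdet : (lagrangeCoeffMatrix y * W).det ≠ 0 := by
    rw [hLW, det_diagonal]
    exact prod_ne_zero_iff.2 fun k _ => prod_ne_zero_iff.2 fun j hj =>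
      sub_ne_zero.2 (hy.ne (mem_erase.1 hj).1.symm)
  exact left_ne_zero_of_mul (det_mul _ W ▸ hdet)

end LagrangeCoeff

theorem Complex.injective_exp_ofReal_mul {ι : Type*} {w : ι → ℂ}
    (hw : Function.Injective fun k => (w k).re) {r : ℝ} (hr : r ≠ 0) :
    Function.Injective fun k => exp (r * w k) := fun k l h => hw <| by
  have hnorm := congrArg (‖·‖) h
  simp only [norm_exp, re_ofReal_mul, Real.exp_eq_exp] at hnorm
  exact mul_left_cancel₀ hr hnorm

theorem gaborAks_eq_lagrangeCoeffMatrix (N : ℕ) (w : Fin N → ℂ) (α : ℝ) (k s : Fin N) :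
    gaborAks N w α k s = lagrangeCoeffMatrix (fun j => exp (((2 * π / α : ℝ) : ℂ) * w j)) k s := by
  simp only [gaborAks, lagrangeCoeffMatrix, of_apply, mul_sum, Complex.exp_sum]

theorem gaborM_sub_natCast (N : ℕ) (a w : Fin N → ℂ) (α θ : ℝ) (s j : ℕ) :
    gaborM N a w α s (θ - j) = ∑ k, exp (((-(2 * π) : ℝ) : ℂ) * w k) ^ j *
      (a k * exp (((2 * π * θ : ℝ) : ℂ) * w k)) * gaborAks N w α k s := by
  refine sum_congr rfl fun k _ => ?_
  have hexp : exp (((2 * π * (θ - j) : ℝ) : ℂ) * w k) =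
      exp (((-(2 * π) : ℝ) : ℂ) * w k) ^ j * exp (((2 * π * θ : ℝ) : ℂ) * w k) := by
    rw [← Complex.exp_nat_mul, ← Complex.exp_add]
    push_cast
    ring_nf
  rw [hexp]
  ring

theorem gaborM_matrix_eq_vandermonde_mul (N : ℕ) (a w : Fin N → ℂ) (α θ : ℝ) :
    of (fun j s : Fin N => gaborM N a w α s (θ - j)) =
      (vandermonde fun k => exp (((-(2 * π) : ℝ) : ℂ) * w k))ᵀ *
        diagonal (fun k => a k * exp (((2 * π * θ : ℝ) : ℂ) * w k)) *
        lagrangeCoeffMatrix (fun j => exp (((2 * π / α : ℝ) : ℂ) * w j)) := by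
  ext j s
  rw [mul_apply]
  simp only [of_apply, gaborM_sub_natCast, mul_diagonal, transpose_apply,
    vandermonde_apply, gaborAks_eq_lagrangeCoeffMatrix]

/-- For `a_k ≠ 0` and pairwise distinct `Re w_k`, the `N × N` matrix
`B_{j,s} = m_s(θ - j)` is nonsingular for every `θ ∈ ℝ`. -/
theorem gaborM_block_det_ne_zero (N : ℕ) (α : ℝ) (hα : 0 < α)
    (a w : Fin N → ℂ) (ha : ∀ k, a k ≠ 0)
    (hww : ∀ k l, k ≠ l → (w k).re ≠ (w l).re)
    (θ : ℝ) (B : Matrix (Fin N) (Fin N) ℂ)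
    (hB : ∀ j s : Fin N, B j s = gaborM N a w α (s : ℕ) (θ - (j : ℕ))) :
    B.det ≠ 0 := by
  have hre : Function.Injective fun k => (w k).re := fun k l => not_imp_not.1 (hww k l)
  obtain rfl : B = of fun j s : Fin N => gaborM N a w α s (θ - j) := ext hB
  rw [gaborM_matrix_eq_vandermonde_mul, det_mul, det_mul, det_transpose, det_diagonal]
  refine mul_ne_zero (mul_ne_zero ?_ ?_) (det_lagrangeCoeffMatrix_ne_zero ?_)
  · exact det_vandermonde_ne_zero_iff.2 (injective_exp_ofReal_mul hre (by simp [pi_ne_zero]))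
  · exact prod_ne_zero_iff.2 fun k _ => mul_ne_zero (ha k) (exp_ne_zero _)
  · exact injective_exp_ofReal_mul hre (by positivity)
end
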